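/- arXiv:1706.07357 — 3 statements merged into one kernel-verified Lean document; each statement's English description precedes it below -/
import Mathlib

section
/- Let n ≥ 1, let 0 < r₂ ≤ r₁, let x ∈ ℝⁿ, and let f be a twice continuously differentiable convex function on B_∞(x, r₁+r₂) with ‖∇f(z)‖_∞ ≤ L for all z ∈ B_∞(x, r₁+r₂). Then E_{y} E_{z} Δf(z) ≤ nL/r₁, where y is uniformly distributed on B_∞(x, r₁), z is (conditionally on y) uniformly distributed on B_∞(y, r₂), and Δf = Σᵢ ∂²f/∂xᵢ² is the Laplacian of f. -/
open MeasureTheory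

/-- The closed `ℓ∞`-ball of radius `r` around `x` in `ℝⁿ`. -/
def Binf {n : ℕ} (x : EuclideanSpace ℝ (Fin n)) (r : ℝ) : Set (EuclideanSpace ℝ (Fin n)) :=
  {z | ∀ i, |z i - x i| ≤ r}

/-- The Laplacian `Δf(z) = ∑ i, ∂²f/∂xᵢ²(z)`. -/
noncomputable def laplacian {n : ℕ} (f : EuclideanSpace ℝ (Fin n) → ℝ)
    (z : EuclideanSpace ℝ (Fin n)) : ℝ :=
  ∑ i, fderiv ℝ (fun w => fderiv ℝ f w (EuclideanSpace.single i 1)) z (EuclideanSpace.single i 1)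

/-!
Since `Δf = div ∇f`, write `z = y + u` with `u` uniform in `B_∞(0, r₂)` and swap the two
integrals (Fubini): it suffices to bound `∫_{B_∞(x, r₁)} Δf(y + u) dy` for each fixed `u`.
By the divergence theorem this is the flux of `∇f(· + u)` through the `2n` faces of the cube
`B_∞(x, r₁)`, each of area `(2r₁)ⁿ⁻¹`, on which `|∂ᵢf| ≤ L`. So it is at most
`2nL(2r₁)ⁿ⁻¹ = nL(2r₁)ⁿ/r₁`, and dividing by the volume `(2r₁)ⁿ` gives `nL/r₁`.
-/

open Set Filter Topology

lemma add_mem_interior_of_forall_add_mem {G : Type*} [TopologicalSpace G] [AddGroup G]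
    [IsTopologicalAddGroup G] {s t S : Set G} (hst : ∀ y ∈ s, ∀ u ∈ t, y + u ∈ S) {y u : G}
    (hy : y ∈ interior s) (hu : u ∈ t) : y + u ∈ interior S :=
  interior_mono (image_subset_iff.2 fun z hz => hst z hz u hu : (· + u) '' s ⊆ S)
    ((isOpenMap_add_right u).image_interior_subset _ (mem_image_of_mem _ hy))

lemma Convex.ae_restrict_mem_interior {F : Type*} [NormedAddCommGroup F] [NormedSpace ℝ F]
    [MeasurableSpace F] [BorelSpace F] [FiniteDimensional ℝ F] (μ : Measure F)
    [μ.IsAddHaarMeasure] {s : Set F} (hs : Convex ℝ s) : ∀ᵐ z ∂μ.restrict s, z ∈ interior s := by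
  change μ.restrict s (interior s)ᶜ = 0
  rw [Measure.restrict_apply isOpen_interior.measurableSet.compl]
  refine measure_mono_null (fun z hz => ?_) (hs.addHaar_frontier μ)
  exact ⟨subset_closure hz.2, hz.1⟩

section Derivatives

variable {F : Type*} [NormedAddCommGroup F] [NormedSpace ℝ F] {f : F → ℝ} {s : Set F}

lemma fderivWithin_eventuallyEq_fderiv {z : F} (hs : s ∈ 𝓝 z) :
    fderivWithin ℝ f s =ᶠ[𝓝 z] fderiv ℝ f := by
  simpa only [fderivWithin_univ] using fderivWithin_eventually_congr_set (eventuallyEq_univ.2 hs)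

lemma ContDiffOn.hasFDerivAt_fderivWithin_apply {z : F} (hf : ContDiffOn ℝ 2 f s)
    (hz : z ∈ interior s) (v : F) :
    HasFDerivAt (fun w => fderivWithin ℝ f s w v) (fderiv ℝ (fun w => fderiv ℝ f w v) z) z := by
  have hs : s ∈ 𝓝 z := mem_interior_iff_mem_nhds.1 hz
  have hdiff : DifferentiableAt ℝ (fun w => fderiv ℝ f w v) z :=
    (((hf.contDiffAt hs).fderiv_right (m := 1) (by norm_num)).differentiableAt
      one_ne_zero).clm_apply (differentiableAt_const v)
  exact hdiff.hasFDerivAt.congr_of_eventuallyEq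
    ((fderivWithin_eventuallyEq_fderiv hs).fun_comp (· v))

lemma ContDiffOn.abs_fderivWithin_apply_le {v : F} {L : ℝ} (hf : ContDiffOn ℝ 1 f s)
    (hs : Convex ℝ s) (hsc : IsClosed s) (hint : (interior s).Nonempty)
    (hL : ∀ z ∈ interior s, |fderiv ℝ f z v| ≤ L) : ∀ z ∈ s, |fderivWithin ℝ f s z v| ≤ L := by
  have hcont : ContinuousOn (fun z => fderivWithin ℝ f s z v) s :=
    (hf.continuousOn_fderivWithin (uniqueDiffOn_convex hs hint) le_rfl).clm_apply
      continuousOn_const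
  have hcl : closure (interior s) = s := by
    rw [hs.closure_interior_eq_closure_of_nonempty_interior hint, hsc.closure_eq]
  have hbound : (fun z => fderivWithin ℝ f s z v) '' interior s ⊆ {t | |t| ≤ L} := by
    rintro _ ⟨z, hz, rfl⟩
    change |fderivWithin ℝ f s z v| ≤ L
    rw [fderivWithin_of_mem_nhds (mem_interior_iff_mem_nhds.1 hz)]
    exact hL z hz
  intro z hz
  exact closure_minimal hbound (isClosed_le continuous_abs continuous_const)
    ((hcont.mono hcl.le).image_closure (mem_image_of_mem _ (hcl.symm ▸ hz)))

end Derivatives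

section Laplacian

variable {n : ℕ} {f : EuclideanSpace ℝ (Fin n) → ℝ} {s : Set (EuclideanSpace ℝ (Fin n))}

/-- `laplacian f` is a junk value on the boundary of the domain of `f`; this version is continuous
up to the boundary when `f` is `C²` there, and agrees with `laplacian f` inside. -/
noncomputable def laplacianWithin (f : EuclideanSpace ℝ (Fin n) → ℝ)
    (s : Set (EuclideanSpace ℝ (Fin n))) (z : EuclideanSpace ℝ (Fin n)) : ℝ :=
  ∑ i, fderivWithin ℝ (fun w => fderivWithin ℝ f s w (EuclideanSpace.single i 1)) s z
    (EuclideanSpace.single i 1)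

lemma laplacianWithin_of_mem_interior {z : EuclideanSpace ℝ (Fin n)} (hz : z ∈ interior s) :
    laplacianWithin f s z = laplacian f z := by
  have hs : s ∈ 𝓝 z := mem_interior_iff_mem_nhds.1 hz
  refine Finset.sum_congr rfl fun i _ => ?_
  have hderiv : (fun w => fderivWithin ℝ f s w (EuclideanSpace.single i 1))
      =ᶠ[𝓝 z] fun w => fderiv ℝ f w (EuclideanSpace.single i 1) :=
    (fderivWithin_eventuallyEq_fderiv hs).fun_comp (· _)
  rw [fderivWithin_of_mem_nhds hs, hderiv.fderiv_eq]

lemma ContDiffOn.continuousOn_laplacianWithin (hf : ContDiffOn ℝ 2 f s) (hs : UniqueDiffOn ℝ s) :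
    ContinuousOn (laplacianWithin f s) s := by
  have hf' : ContDiffOn ℝ 1 (fderivWithin ℝ f s) s := hf.fderivWithin hs (by norm_num)
  refine continuousOn_finsetSum _ fun i _ => ?_
  exact ((hf'.clm_apply contDiffOn_const).continuousOn_fderivWithin hs le_rfl).clm_apply
    continuousOn_const

lemma ContDiffOn.integrableOn_laplacian (hf : ContDiffOn ℝ 2 f s) (hs : Convex ℝ s)
    (hsc : IsCompact s) (hint : (interior s).Nonempty) : IntegrableOn (laplacian f) s := by
  refine ((hf.continuousOn_laplacianWithin (uniqueDiffOn_convex hs hint)).integrableOn_compact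
    hsc).congr_fun_ae ?_
  filter_upwards [hs.ae_restrict_mem_interior volume] with z hz
  exact laplacianWithin_of_mem_interior hz

lemma fderiv_apply_single_eq_gradient (f : EuclideanSpace ℝ (Fin n) → ℝ)
    (z : EuclideanSpace ℝ (Fin n)) (i : Fin n) :
    fderiv ℝ f z (EuclideanSpace.single i 1) = gradient f z i := by
  rw [← toDual_gradient, InnerProductSpace.toDual_apply_apply, EuclideanSpace.inner_single_right]
  simp

lemma laplacian_comp_add_right (f : EuclideanSpace ℝ (Fin n) → ℝ)
    (u y : EuclideanSpace ℝ (Fin n)) : laplacian (fun w => f (w + u)) y = laplacian f (y + u) := by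
  simp only [laplacian, fderiv_comp_add_right]
  exact Finset.sum_congr rfl fun i _ =>
    by rw [fderiv_comp_add_right (f := fun w => fderiv ℝ f w (EuclideanSpace.single i 1))]

lemma ContDiffOn.integrableOn_laplacian_comp_add {t S : Set (EuclideanSpace ℝ (Fin n))}
    (hf : ContDiffOn ℝ 2 f S) (hS : UniqueDiffOn ℝ S)
    (hs : Convex ℝ s) (ht : Convex ℝ t) (hsc : IsCompact s) (htc : IsCompact t)
    (hst : ∀ y ∈ s, ∀ u ∈ t, y + u ∈ S) :
    IntegrableOn (fun p => laplacian f (p.1 + p.2)) (s ×ˢ t) := by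
  have hcont : ContinuousOn (fun p => laplacianWithin f S (p.1 + p.2)) (s ×ˢ t) :=
    (hf.continuousOn_laplacianWithin hS).comp continuous_add.continuousOn
      fun p hp => hst _ hp.1 _ hp.2
  refine (hcont.integrableOn_compact (hsc.prod htc)).congr_fun_ae ?_
  rw [Measure.volume_eq_prod]
  filter_upwards [(hs.prod ht).ae_restrict_mem_interior (volume.prod volume)] with p hp
  rw [interior_prod_eq] at hp
  exact laplacianWithin_of_mem_interior
    (add_mem_interior_of_forall_add_mem hst hp.1 (interior_subset hp.2))

end Laplacian

lemma abs_integral_divergence_le {m : ℕ} {a b : Fin (m + 1) → ℝ} (hab : a ≤ b)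
    {V : Fin (m + 1) → (Fin (m + 1) → ℝ) → ℝ}
    {V' : Fin (m + 1) → (Fin (m + 1) → ℝ) → (Fin (m + 1) → ℝ) →L[ℝ] ℝ} {L : ℝ}
    (hc : ∀ i, ContinuousOn (V i) (Icc a b))
    (hd : ∀ w ∈ univ.pi fun i => Ioo (a i) (b i), ∀ i, HasFDerivAt (V i) (V' i w) w)
    (hi : IntegrableOn (fun w => ∑ i, V' i w (Pi.single i 1)) (Icc a b))
    (hL : ∀ w ∈ Icc a b, ∀ i, |V i w| ≤ L) :
    |∫ w in Icc a b, ∑ i, V' i w (Pi.single i 1)|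
      ≤ ∑ i : Fin (m + 1), 2 * L * ∏ j, (b (i.succAbove j) - a (i.succAbove j)) := by
  rw [integral_divergence_of_hasFDerivAt_off_countable' a b hab V V' ∅ countable_empty hc
    (fun w hw => hd w hw.1) hi]
  refine (Finset.abs_sum_le_sum_abs _ _).trans (Finset.sum_le_sum fun i _ => ?_)
  have hface : ∀ t ∈ Icc (a i) (b i),
      |∫ x in Icc (a ∘ i.succAbove) (b ∘ i.succAbove), V i (i.insertNth t x)|
        ≤ L * ∏ j, (b (i.succAbove j) - a (i.succAbove j)) := by
    intro t ht
    rw [← Real.volume_Icc_pi_toReal fun j => hab _, ← measureReal_def]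
    exact norm_setIntegral_le_of_norm_le_const measure_Icc_lt_top
      fun x hx => (Real.norm_eq_abs _).trans_le (hL _ (Fin.insertNth_mem_Icc.2 ⟨ht, hx⟩) i)
  have hb := hface (b i) (right_mem_Icc.2 (hab i))
  have ha := hface (a i) (left_mem_Icc.2 (hab i))
  linarith [abs_sub (∫ x in Icc (a ∘ i.succAbove) (b ∘ i.succAbove), V i (i.insertNth (b i) x))
    (∫ x in Icc (a ∘ i.succAbove) (b ∘ i.succAbove), V i (i.insertNth (a i) x))]

section Binf

variable {n : ℕ}

lemma toLp_preimage_Binf (c : EuclideanSpace ℝ (Fin n)) (r : ℝ) :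
    WithLp.toLp 2 ⁻¹' Binf c r = Icc (fun i => c i - r) (fun i => c i + r) := by
  ext w
  simp [Binf, abs_le, Pi.le_def, forall_and, add_comm]

lemma Binf_eq_image (c : EuclideanSpace ℝ (Fin n)) (r : ℝ) :
    Binf c r = WithLp.toLp 2 '' Icc (fun i => c i - r) (fun i => c i + r) := by
  rw [← toLp_preimage_Binf, image_preimage_eq _ (WithLp.toLp_surjective 2)]

lemma isCompact_Binf (c : EuclideanSpace ℝ (Fin n)) (r : ℝ) : IsCompact (Binf c r) := by
  rw [Binf_eq_image]
  exact isCompact_Icc.image (PiLp.continuous_toLp 2 _)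

lemma convex_Binf (c : EuclideanSpace ℝ (Fin n)) (r : ℝ) : Convex ℝ (Binf c r) := by
  rw [Binf_eq_image]
  exact (convex_Icc _ _).linear_image (PiLp.continuousLinearEquiv 2 ℝ _).symm.toLinearMap

lemma toLp_mem_interior_Binf {c : EuclideanSpace ℝ (Fin n)} {r : ℝ} {w : Fin n → ℝ}
    (hw : w ∈ univ.pi fun i => Ioo (c i - r) (c i + r)) :
    WithLp.toLp 2 w ∈ interior (Binf c r) := by
  have hU : IsOpen (WithLp.ofLp ⁻¹' univ.pi fun i => Ioo (c i - r) (c i + r) :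
      Set (EuclideanSpace ℝ (Fin n))) :=
    (isOpen_set_pi finite_univ fun _ _ => isOpen_Ioo).preimage (PiLp.continuous_ofLp 2 _)
  refine interior_maximal (fun z hz i => ?_) hU hw
  have := hz i trivial
  exact abs_le.2 ⟨by linarith [this.1], by linarith [this.2]⟩

lemma volume_real_Binf (c : EuclideanSpace ℝ (Fin n)) {r : ℝ} (hr : 0 ≤ r) :
    volume.real (Binf c r) = (2 * r) ^ n := by
  rw [measureReal_def, ← (PiLp.volume_preserving_toLp (Fin n)).measure_preimage
    (isCompact_Binf c r).isClosed.measurableSet.nullMeasurableSet, toLp_preimage_Binf,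
    Real.volume_Icc_pi_toReal (fun i => by linarith)]
  simp [add_sub_sub_cancel, two_mul]

lemma center_mem_interior_Binf (c : EuclideanSpace ℝ (Fin n)) {r : ℝ} (hr : 0 < r) :
    c ∈ interior (Binf c r) :=
  toLp_mem_interior_Binf fun i _ => ⟨by linarith, by linarith⟩

lemma add_mem_Binf {x y u : EuclideanSpace ℝ (Fin n)} {r₁ r₂ : ℝ} (hy : y ∈ Binf x r₁)
    (hu : u ∈ Binf 0 r₂) : y + u ∈ Binf x (r₁ + r₂) := fun i =>
  calc |(y + u) i - x i| = |(y i - x i) + (u i - 0)| := by simp [add_sub_right_comm]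
    _ ≤ r₁ + r₂ := (abs_add_le _ _).trans (add_le_add (hy i) (hu i))

lemma preimage_add_left_Binf (y : EuclideanSpace ℝ (Fin n)) (r : ℝ) :
    (y + ·) ⁻¹' Binf y r = Binf 0 r := by
  ext u
  simp [Binf]

lemma setIntegral_Binf_eq_setIntegral_Binf_zero (h : EuclideanSpace ℝ (Fin n) → ℝ)
    (y : EuclideanSpace ℝ (Fin n)) (r : ℝ) :
    ∫ z in Binf y r, h z = ∫ u in Binf 0 r, h (y + u) := by
  rw [← preimage_add_left_Binf y r, (measurePreserving_add_left volume y).setIntegral_preimage_emb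
    (MeasurableEquiv.addLeft y).measurableEmbedding]

lemma setIntegral_Binf_eq_setIntegral_Icc (h : EuclideanSpace ℝ (Fin n) → ℝ)
    (c : EuclideanSpace ℝ (Fin n)) (r : ℝ) :
    ∫ y in Binf c r, h y
      = ∫ w in Icc (fun i => c i - r) (fun i => c i + r), h (WithLp.toLp 2 w) := by
  rw [← toLp_preimage_Binf, (PiLp.volume_preserving_toLp _).setIntegral_preimage_emb
    (MeasurableEquiv.toLp 2 _).measurableEmbedding]

end Binf

lemma abs_integral_laplacian_Binf_le {n : ℕ} {g : EuclideanSpace ℝ (Fin n) → ℝ}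
    {c : EuclideanSpace ℝ (Fin n)} {r L : ℝ} (hr : 0 < r) (hg : ContDiffOn ℝ 2 g (Binf c r))
    (hL : ∀ z ∈ interior (Binf c r), ∀ i, |fderiv ℝ g z (EuclideanSpace.single i 1)| ≤ L) :
    |∫ y in Binf c r, laplacian g y| ≤ n * L * (2 * r) ^ n / r := by
  obtain _ | m := n
  · simp [laplacian]
  set B := Binf c r
  have hint : (interior B).Nonempty := ⟨c, center_mem_interior_Binf c hr⟩
  have hgrad : ∀ z ∈ B, ∀ i, |fderivWithin ℝ g B z (EuclideanSpace.single i 1)| ≤ L :=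
    fun z hz i => (hg.of_le one_le_two).abs_fderivWithin_apply_le (convex_Binf c r)
      (isCompact_Binf c r).isClosed hint (fun z hz => hL z hz i) z hz
  have hmaps : MapsTo (WithLp.toLp 2) (Icc (fun i => c i - r) (fun i => c i + r)) B :=
    fun w hw => by rwa [← mem_preimage, toLp_preimage_Binf]
  -- The divergence theorem is applied to the within-derivative of `g`, transported to
  -- `Fin (m + 1) → ℝ`: unlike `fderiv ℝ g`, it is continuous up to the faces of the cube.
  have hdiv := abs_integral_divergence_le (L := L) (fun i => by linarith)
    (V := fun i w => fderivWithin ℝ g B (WithLp.toLp 2 w) (EuclideanSpace.single i 1))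
    (V' := fun i w => (fderiv ℝ (fun z => fderiv ℝ g z (EuclideanSpace.single i 1))
      (WithLp.toLp 2 w)).comp (PiLp.continuousLinearEquiv 2 ℝ _).symm.toContinuousLinearMap)
    (fun i => ((hg.continuousOn_fderivWithin (uniqueDiffOn_convex (convex_Binf c r) hint)
      one_le_two).clm_apply continuousOn_const).comp (PiLp.continuous_toLp 2 _).continuousOn hmaps)
    (fun w hw i => (hg.hasFDerivAt_fderivWithin_apply (toLp_mem_interior_Binf hw) _).comp w
      (PiLp.continuousLinearEquiv 2 ℝ fun _ : Fin (m + 1) => ℝ).symm.hasFDerivAt)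
    (by
      rw [← toLp_preimage_Binf]
      exact ((PiLp.volume_preserving_toLp _).integrableOn_comp_preimage
        (MeasurableEquiv.toLp 2 _).measurableEmbedding).2
        (hg.integrableOn_laplacian (convex_Binf c r) (isCompact_Binf c r) hint))
    fun w hw i => hgrad _ (hmaps hw) i
  have hcube : ∑ i : Fin (m + 1), 2 * L * ∏ j : Fin m,
      ((c (i.succAbove j) + r) - (c (i.succAbove j) - r))
        = (m + 1) * L * (2 * r) ^ (m + 1) / r := by
    simp only [add_sub_sub_cancel, Finset.prod_const, Finset.card_univ, Fintype.card_fin,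
      Finset.sum_const, nsmul_eq_mul]
    field_simp
    push_cast
    ring
  push_cast
  rw [setIntegral_Binf_eq_setIntegral_Icc, ← hcube]
  exact hdiv

lemma abs_integral_laplacian_add_le {n : ℕ} {f : EuclideanSpace ℝ (Fin n) → ℝ}
    {x u : EuclideanSpace ℝ (Fin n)} {r₁ r₂ L : ℝ} (hr₁ : 0 < r₁)
    (hf : ContDiffOn ℝ 2 f (Binf x (r₁ + r₂)))
    (hL : ∀ z ∈ Binf x (r₁ + r₂), ∀ i, |gradient f z i| ≤ L) (hu : u ∈ Binf 0 r₂) :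
    |∫ y in Binf x r₁, laplacian f (y + u)| ≤ n * L * (2 * r₁) ^ n / r₁ := by
  have hsum : ∀ y ∈ Binf x r₁, ∀ u ∈ Binf 0 r₂, y + u ∈ Binf x (r₁ + r₂) :=
    fun _ hy _ hu => add_mem_Binf hy hu
  simp_rw [← laplacian_comp_add_right]
  refine abs_integral_laplacian_Binf_le hr₁
    (hf.comp (contDiff_id.add contDiff_const).contDiffOn fun y hy => hsum y hy u hu)
    fun y hy i => ?_
  rw [fderiv_comp_add_right, fderiv_apply_single_eq_gradient]
  exact hL _ (interior_subset (add_mem_interior_of_forall_add_mem hsum hy hu)) i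

theorem stmt1_general {n : ℕ} (r₁ r₂ L : ℝ) (hr₂ : 0 < r₂) (hr₁₂ : r₂ ≤ r₁)
    (x : EuclideanSpace ℝ (Fin n)) (f : EuclideanSpace ℝ (Fin n) → ℝ)
    (hf : ContDiffOn ℝ 2 f (Binf x (r₁ + r₂)))
    (hL : ∀ z ∈ Binf x (r₁ + r₂), ∀ i, |gradient f z i| ≤ L) :
    ((2 * r₁) ^ n)⁻¹ *
        ∫ y in Binf x r₁, (((2 * r₂) ^ n)⁻¹ * ∫ z in Binf y r₂, laplacian f z)
      ≤ n * L / r₁ := by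
  have hr₁ : 0 < r₁ := hr₂.trans_le hr₁₂
  have hsum : ∀ y ∈ Binf x r₁, ∀ u ∈ Binf 0 r₂, y + u ∈ Binf x (r₁ + r₂) :=
    fun _ hy _ hu => add_mem_Binf hy hu
  have hinner : ∀ u ∈ Binf 0 r₂,
      ‖∫ y in Binf x r₁, laplacian f (y + u)‖ ≤ n * L * (2 * r₁) ^ n / r₁ :=
    fun u hu => (Real.norm_eq_abs _).trans_le (abs_integral_laplacian_add_le hr₁ hf hL hu)
  have hprod : Integrable (Function.uncurry fun y u => laplacian f (y + u))
      ((volume.restrict (Binf x r₁)).prod (volume.restrict (Binf 0 r₂))) := by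
    rw [Measure.prod_restrict, ← Measure.volume_eq_prod]
    exact hf.integrableOn_laplacian_comp_add (uniqueDiffOn_convex (convex_Binf _ _)
      ⟨x, center_mem_interior_Binf x (by linarith)⟩) (convex_Binf _ _) (convex_Binf _ _)
      (isCompact_Binf _ _) (isCompact_Binf _ _) hsum
  have hbound : ∫ y in Binf x r₁, ∫ z in Binf y r₂, laplacian f z
      ≤ n * L * (2 * r₁) ^ n / r₁ * (2 * r₂) ^ n := by
    simp_rw [setIntegral_Binf_eq_setIntegral_Binf_zero (laplacian f)]
    rw [integral_integral_swap hprod, ← volume_real_Binf 0 hr₂.le]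
    exact (le_abs_self _).trans (norm_setIntegral_le_of_norm_le_const
      (isCompact_Binf _ _).measure_lt_top hinner)
  calc _ = ((2 * r₁) ^ n)⁻¹ * ((2 * r₂) ^ n)⁻¹ *
        ∫ y in Binf x r₁, ∫ z in Binf y r₂, laplacian f z := by
        rw [integral_const_mul, mul_assoc]
    _ ≤ ((2 * r₁) ^ n)⁻¹ * ((2 * r₂) ^ n)⁻¹ * (n * L * (2 * r₁) ^ n / r₁ * (2 * r₂) ^ n) := by
        gcongr
    _ = n * L / r₁ := by field_simp

/-- For a twice continuously differentiable convex function `f` on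
`B_∞(x, r₁ + r₂)` whose gradient is bounded by `L` in `ℓ∞`-norm, the expectation of the
Laplacian `Δf(z)`, over `y` uniform in `B_∞(x, r₁)` and `z` uniform in `B_∞(y, r₂)`,
is at most `n L / r₁`. -/
theorem stmt1 {n : ℕ} (hn : 1 ≤ n) (r₁ r₂ L : ℝ) (hr₂ : 0 < r₂) (hr₁₂ : r₂ ≤ r₁)
    (x : EuclideanSpace ℝ (Fin n)) (f : EuclideanSpace ℝ (Fin n) → ℝ)
    (hf : ContDiffOn ℝ 2 f (Binf x (r₁ + r₂)))
    (hconv : ConvexOn ℝ (Binf x (r₁ + r₂)) f)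
    (hL : ∀ z ∈ Binf x (r₁ + r₂), ∀ i, |gradient f z i| ≤ L) :
    ((2 * r₁) ^ n)⁻¹ *
        ∫ y in Binf x r₁, (((2 * r₂) ^ n)⁻¹ * ∫ z in Binf y r₂, laplacian f z)
      ≤ n * L / r₁ :=
  stmt1_general r₁ r₂ L hr₂ hr₁₂ x f hf hL
end

section
/- Let K ⊆ ℝⁿ be a compact convex set with B(0,r) ⊆ K ⊆ B(0,R) for 0 < r ≤ R, let 0 ≤ δ < r, and let x ∈ ℝⁿ, x ≠ 0. For d ∈ K define α_x(d) = max{α ∈ ℝ : d + α·x ∈ K} and h_x(d) = −α_x(d)·‖x‖₂. Then h_x is (R+δ)/(r−δ)-Lipschitz on B(0,δ): for all d₁, d₂ ∈ B(0,δ), |h_x(d₁) − h_x(d₂)| ≤ ((R+δ)/(r−δ))·‖d₁ − d₂‖₂. -/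
/-!
If a ball `B(d₂, ρ)` lies in the convex set `K` and `d₁ + v ∈ K`, then the convex combination
with weight `λ = ρ / (‖d₁ - d₂‖ + ρ)` of `d₁ + v` and the point of the ball opposite to `d₁`
is `d₂ + λ v`. Applied with `v = α_x(d₁) x` this gives `λ α_x(d₁) ≤ α_x(d₂)`, so
`α_x(d₁) - α_x(d₂) ≤ (‖d₁ - d₂‖ / ρ) α_x(d₁)`, and `α_x(d₁) ‖x‖ ≤ R + ‖d₁‖` because `K ⊆ B(0, R)`.
For `d₁, d₂ ∈ B(0, δ)` one takes `ρ = r - δ`, and symmetry gives the Lipschitz bound.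
-/

open Metric

variable {E : Type*} [NormedAddCommGroup E] [NormedSpace ℝ E]

/-- The paper's `α_x(d)`; it is the maximum only when the set is nonempty and bounded above. -/
noncomputable def rayExit (K : Set E) (x d : E) : ℝ :=
  sSup {α : ℝ | d + α • x ∈ K}

theorem Convex.add_smul_mem_of_closedBall_subset {K : Set E} (hK : Convex ℝ K) {d₁ d₂ v : E}
    {ρ : ℝ} (hρ : 0 < ρ) (hball : closedBall d₂ ρ ⊆ K) (hv : d₁ + v ∈ K) :
    d₂ + (ρ / (‖d₁ - d₂‖ + ρ)) • v ∈ K := by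
  rcases eq_or_ne d₁ d₂ with rfl | hne
  · simpa [hρ.ne'] using hv
  set s := ‖d₁ - d₂‖
  have hs : 0 < s := norm_pos_iff.mpr (sub_ne_zero.mpr hne)
  set u := d₂ - (ρ / s) • (d₁ - d₂)
  have hu : u ∈ K := hball <| mem_closedBall_iff_norm.mpr <| by
    simp [u, s, norm_smul, abs_of_pos hρ, div_mul_cancel₀ _ hs.ne']
  have hcomb : u + (ρ / (s + ρ)) • (d₁ + v - u) = d₂ + (ρ / (s + ρ)) • v := by
    simp only [u]
    match_scalars <;> field_simp <;> ring
  rw [← hcomb]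
  exact hK.add_smul_sub_mem hu hv ⟨by positivity, div_le_one_of_le₀ (by linarith) (by positivity)⟩

theorem mul_norm_le_of_add_smul_mem_closedBall {R α : ℝ} {x d : E}
    (h : d + α • x ∈ closedBall 0 R) : α * ‖x‖ ≤ R + ‖d‖ := by
  rw [mem_closedBall_zero_iff] at h
  calc α * ‖x‖ ≤ ‖α • x‖ := by
        rw [norm_smul, Real.norm_eq_abs]; gcongr; exact le_abs_self α
    _ = ‖(d + α • x) - d‖ := by rw [add_sub_cancel_left]
    _ ≤ ‖d + α • x‖ + ‖d‖ := norm_sub_le _ _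
    _ ≤ R + ‖d‖ := by gcongr

theorem bddAbove_setOf_add_smul_mem {K : Set E} {R : ℝ} (houter : K ⊆ closedBall 0 R) {x : E}
    (hx : x ≠ 0) (d : E) : BddAbove {α : ℝ | d + α • x ∈ K} :=
  ⟨(R + ‖d‖) / ‖x‖, fun _ hα =>
    (le_div_iff₀ (norm_pos_iff.mpr hx)).mpr (mul_norm_le_of_add_smul_mem_closedBall (houter hα))⟩

theorem rayExit_sub_le {K : Set E} (hKcl : IsClosed K) (hKconv : Convex ℝ K) {R ρ : ℝ}
    (hρ : 0 < ρ) (houter : K ⊆ closedBall 0 R) {x : E} (hx : x ≠ 0) {d₁ d₂ : E} (hd₁ : d₁ ∈ K)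
    (hball : closedBall d₂ ρ ⊆ K) :
    (rayExit K x d₁ - rayExit K x d₂) * ‖x‖ ≤ (R + ‖d₁‖) / ρ * ‖d₁ - d₂‖ := by
  set α₁ := rayExit K x d₁
  set s := ‖d₁ - d₂‖
  have hmem₁ : (0 : ℝ) ∈ {α : ℝ | d₁ + α • x ∈ K} := by simpa using hd₁
  have hα₁ : d₁ + α₁ • x ∈ K :=
    IsClosed.csSup_mem (hKcl.preimage (by fun_prop)) ⟨0, hmem₁⟩
      (bddAbove_setOf_add_smul_mem houter hx d₁)
  have hα₁_nonneg : 0 ≤ α₁ := le_csSup (bddAbove_setOf_add_smul_mem houter hx d₁) hmem₁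
  have hα₁_le : α₁ * ‖x‖ ≤ R + ‖d₁‖ := mul_norm_le_of_add_smul_mem_closedBall (houter hα₁)
  have hweight : ρ / (s + ρ) * α₁ ≤ rayExit K x d₂ := by
    refine le_csSup (bddAbove_setOf_add_smul_mem houter hx d₂) ?_
    simpa [smul_smul] using hKconv.add_smul_mem_of_closedBall_subset hρ hball hα₁
  have hs : 0 ≤ s := norm_nonneg _
  calc (α₁ - rayExit K x d₂) * ‖x‖ ≤ (α₁ - ρ / (s + ρ) * α₁) * ‖x‖ := by gcongr
    _ = s / (s + ρ) * (α₁ * ‖x‖) := by field_simp; ring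
    _ ≤ s / ρ * (R + ‖d₁‖) := by gcongr; linarith
    _ = (R + ‖d₁‖) / ρ * s := by ring

theorem stmt10_general {n : ℕ} (K : Set (EuclideanSpace ℝ (Fin n)))
    (hKcpt : IsCompact K) (hKconv : Convex ℝ K)
    (r R δ : ℝ) (hδr : δ < r)
    (hinner : Metric.closedBall 0 r ⊆ K) (houter : K ⊆ Metric.closedBall 0 R)
    (x : EuclideanSpace ℝ (Fin n)) (hx : x ≠ 0) :
    ∀ d₁ ∈ Metric.closedBall (0 : EuclideanSpace ℝ (Fin n)) δ,
      ∀ d₂ ∈ Metric.closedBall (0 : EuclideanSpace ℝ (Fin n)) δ,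
        |(-(sSup {α : ℝ | d₁ + α • x ∈ K}) * ‖x‖) - (-(sSup {α : ℝ | d₂ + α • x ∈ K}) * ‖x‖)|
          ≤ (R + δ) / (r - δ) * ‖d₁ - d₂‖ := by
  intro d₁ hd₁ d₂ hd₂
  have hρ : 0 < r - δ := by linarith
  have hball : ∀ d ∈ closedBall (0 : EuclideanSpace ℝ (Fin n)) δ, closedBall d (r - δ) ⊆ K :=
    fun d hd => (closedBall_subset_closedBall' (by
      rw [dist_zero_right]; linarith [mem_closedBall_zero_iff.mp hd])).trans hinner
  have hsub : ∀ {d d'}, d ∈ closedBall 0 δ → d' ∈ closedBall 0 δ →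
      (rayExit K x d - rayExit K x d') * ‖x‖ ≤ (R + δ) / (r - δ) * ‖d - d'‖ := by
    intro d d' hd hd'
    calc _ ≤ (R + ‖d‖) / (r - δ) * ‖d - d'‖ :=
          rayExit_sub_le hKcpt.isClosed hKconv hρ houter hx
            (hball d hd (mem_closedBall_self hρ.le)) (hball d' hd')
      _ ≤ _ := by gcongr; exact mem_closedBall_zero_iff.mp hd
  have h₁₂ := hsub hd₁ hd₂
  have h₂₁ := hsub hd₂ hd₁
  rw [norm_sub_rev] at h₂₁
  unfold rayExit at h₁₂ h₂₁
  rw [abs_le]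
  constructor <;> linarith

/-- Let `K ⊆ ℝⁿ` be a compact convex set with `B(0,r) ⊆ K ⊆ B(0,R)`,
`0 < r ≤ R`, let `0 ≤ δ < r`, and let `x ≠ 0`. With `α_x(d) = max {α : d + α • x ∈ K}` and
`h_x(d) = −α_x(d) ‖x‖₂`, the function `h_x` is `(R+δ)/(r−δ)`-Lipschitz on `B(0,δ)`. -/
theorem stmt10 {n : ℕ} (K : Set (EuclideanSpace ℝ (Fin n)))
    (hKcpt : IsCompact K) (hKconv : Convex ℝ K)
    (r R δ : ℝ) (hr : 0 < r) (hrR : r ≤ R) (hδ0 : 0 ≤ δ) (hδr : δ < r)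
    (hinner : Metric.closedBall 0 r ⊆ K) (houter : K ⊆ Metric.closedBall 0 R)
    (x : EuclideanSpace ℝ (Fin n)) (hx : x ≠ 0) :
    ∀ d₁ ∈ Metric.closedBall (0 : EuclideanSpace ℝ (Fin n)) δ,
      ∀ d₂ ∈ Metric.closedBall (0 : EuclideanSpace ℝ (Fin n)) δ,
        |(-(sSup {α : ℝ | d₁ + α • x ∈ K}) * ‖x‖) - (-(sSup {α : ℝ | d₂ + α • x ∈ K}) * ‖x‖)|
          ≤ (R + δ) / (r - δ) * ‖d₁ - d₂‖ :=
  stmt10_general K hKcpt hKconv r R δ hδr hinner houter x hx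
end

section
/- Let K ⊆ ℝⁿ be a convex set with B(0,r) ⊆ K ⊆ B(0,R) for 0 < r ≤ R, let 0 ≤ δ ≤ r, and let c ∈ ℝⁿ with ‖c‖₂ = 1. Then sup_{x ∈ B(K,−δ)} ⟨c, x⟩ ≥ (1 − δ/r)·sup_{x ∈ K} ⟨c, x⟩ ≥ sup_{x ∈ K} ⟨c, x⟩ − (R/r)·δ, and sup_{x ∈ B(K,δ)} ⟨c, x⟩ ≤ sup_{x ∈ K} ⟨c, x⟩ + δ. -/
open RealInnerProductSpace

/-- Let `K ⊆ ℝⁿ` be convex with `B(0,r) ⊆ K ⊆ B(0,R)`, `0 < r ≤ R`, let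
`0 ≤ δ ≤ r`, and let `c` be a unit vector. Then
`sup_{x ∈ B(K,−δ)} ⟨c,x⟩ ≥ (1 − δ/r) sup_{x ∈ K} ⟨c,x⟩ ≥ sup_{x ∈ K} ⟨c,x⟩ − (R/r) δ`, and
`sup_{x ∈ B(K,δ)} ⟨c,x⟩ ≤ sup_{x ∈ K} ⟨c,x⟩ + δ`, where `B(K,−δ) = {x : B(x,δ) ⊆ K}` is the
inner parallel body and `B(K,δ) = {x : ∃ y ∈ K, ‖x − y‖ ≤ δ}` the outer parallel body. -/
theorem stmt15 {n : ℕ} (K : Set (EuclideanSpace ℝ (Fin n))) (hKconv : Convex ℝ K)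
    (r R δ : ℝ) (hr : 0 < r) (hrR : r ≤ R) (hδ0 : 0 ≤ δ) (hδr : δ ≤ r)
    (hinner : Metric.closedBall 0 r ⊆ K) (houter : K ⊆ Metric.closedBall 0 R)
    (c : EuclideanSpace ℝ (Fin n)) (hc : ‖c‖ = 1) :
    (1 - δ / r) * sSup ((fun x => ⟪c, x⟫) '' K)
        ≤ sSup ((fun x => ⟪c, x⟫) '' {x | Metric.closedBall x δ ⊆ K}) ∧
      sSup ((fun x => ⟪c, x⟫) '' K) - (R / r) * δ
        ≤ (1 - δ / r) * sSup ((fun x => ⟪c, x⟫) '' K) ∧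
      sSup ((fun x => ⟪c, x⟫) '' {x | ∃ y ∈ K, ‖x - y‖ ≤ δ})
        ≤ sSup ((fun x => ⟪c, x⟫) '' K) + δ := by
  have h0K : (0 : EuclideanSpace ℝ (Fin n)) ∈ K := by
    apply hinner; simp [hr.le]
  have hKne : ((fun x => ⟪c, x⟫) '' K).Nonempty := ⟨⟪c, 0⟫, 0, h0K, rfl⟩
  have hbound : ∀ x ∈ K, ⟪c, x⟫ ≤ R := by
    intro x hx
    calc ⟪c, x⟫ ≤ ‖c‖ * ‖x‖ := real_inner_le_norm c x
    _ ≤ R := by rw [hc, one_mul]; simpa using houter hx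
  have hbdd : BddAbove ((fun x => ⟪c, x⟫) '' K) :=
    ⟨R, by rintro _ ⟨x, hx, rfl⟩; exact hbound x hx⟩
  have hSleR : sSup ((fun x => ⟪c, x⟫) '' K) ≤ R :=
    csSup_le hKne (by rintro _ ⟨x, hx, rfl⟩; exact hbound x hx)
  -- inner parallel body facts
  have hinnersub : {x | Metric.closedBall x δ ⊆ K} ⊆ K := fun x hx =>
    hx (Metric.mem_closedBall_self hδ0)
  have h0inner : (0 : EuclideanSpace ℝ (Fin n)) ∈ {x | Metric.closedBall x δ ⊆ K} := by
    intro y hy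
    exact hinner (Metric.closedBall_subset_closedBall hδr hy)
  have hbddI : BddAbove ((fun x => ⟪c, x⟫) '' {x | Metric.closedBall x δ ⊆ K}) :=
    ⟨R, by rintro _ ⟨x, hx, rfl⟩; exact hbound x (hinnersub hx)⟩
  have hIne : ((fun x => ⟪c, x⟫) '' {x | Metric.closedBall x δ ⊆ K}).Nonempty :=
    ⟨⟪c, 0⟫, 0, h0inner, rfl⟩
  have hI0 : (0 : ℝ) ≤ sSup ((fun x => ⟪c, x⟫) '' {x | Metric.closedBall x δ ⊆ K}) := by
    have := le_csSup hbddI ⟨0, h0inner, rfl⟩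
    simpa using this
  have hshrink : ∀ x ∈ K, ((1 - δ / r) • x) ∈ {x | Metric.closedBall x δ ⊆ K} := by
    intro x hx y hy
    rcases eq_or_lt_of_le hδ0 with h0 | h0
    · subst h0
      rw [Metric.mem_closedBall, dist_eq_norm] at hy
      simp only [zero_div, sub_zero, one_smul] at hy
      have : y = x := norm_sub_eq_zero_iff.mp (le_antisymm hy (norm_nonneg _))
      rwa [this]
    · rw [Metric.mem_closedBall, dist_eq_norm] at hy
      set z : EuclideanSpace ℝ (Fin n) := (r / δ) • (y - (1 - δ / r) • x) with hz
      have hzK : z ∈ K := by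
        apply hinner
        rw [Metric.mem_closedBall, dist_zero_right, hz, norm_smul, Real.norm_eq_abs,
          abs_of_pos (div_pos hr h0)]
        calc r / δ * ‖y - (1 - δ / r) • x‖ ≤ r / δ * δ :=
              mul_le_mul_of_nonneg_left hy (div_pos hr h0).le
        _ = r := by field_simp
      have hy' : y = (1 - δ / r) • x + (δ / r) • z := by
        rw [hz, smul_smul]
        have : δ / r * (r / δ) = 1 := by field_simp
        rw [this, one_smul]
        abel
      rw [hy']
      refine hKconv hx hzK ?_ ?_ ?_
      · have : δ / r ≤ 1 := (div_le_one hr).mpr hδr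
        linarith
      · positivity
      · ring
  have hstep1 : ∀ x ∈ K, (1 - δ / r) * ⟪c, x⟫ ≤
      sSup ((fun x => ⟪c, x⟫) '' {x | Metric.closedBall x δ ⊆ K}) := by
    intro x hx
    have : (1 - δ / r) * ⟪c, x⟫ = ⟪c, (1 - δ / r) • x⟫ := (real_inner_smul_right c x _).symm
    rw [this]
    exact le_csSup hbddI ⟨_, hshrink x hx, rfl⟩
  refine ⟨?_, ?_, ?_⟩
  · -- first inequality
    rcases eq_or_lt_of_le hδr with hδeq | hδlt
    · have h1 : 1 - δ / r = 0 := by rw [hδeq, div_self hr.ne']; ring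
      rw [h1, zero_mul]
      exact hI0
    · have ha : (0:ℝ) < 1 - δ / r := by
        have : δ / r < 1 := (div_lt_one hr).mpr hδlt
        linarith
      rw [mul_comm, ← le_div_iff₀ ha]
      apply csSup_le hKne
      rintro _ ⟨x, hx, rfl⟩
      rw [le_div_iff₀ ha, mul_comm]
      exact hstep1 x hx
  · -- second inequality
    have key : δ * sSup ((fun x => ⟪c, x⟫) '' K) ≤ δ * R :=
      mul_le_mul_of_nonneg_left hSleR hδ0
    have h1 : (1 - δ / r) * sSup ((fun x => ⟪c, x⟫) '' K)
        = sSup ((fun x => ⟪c, x⟫) '' K) - (δ / r) * sSup ((fun x => ⟪c, x⟫) '' K) := by ring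
    rw [h1]
    have : (δ / r) * sSup ((fun x => ⟪c, x⟫) '' K) ≤ (R / r) * δ := by
      rw [div_mul_eq_mul_div, div_mul_eq_mul_div, div_le_div_iff₀ hr hr]
      nlinarith
    linarith
  · -- third inequality
    have hOne : ((fun x => ⟪c, x⟫) '' {x | ∃ y ∈ K, ‖x - y‖ ≤ δ}).Nonempty :=
      ⟨⟪c, 0⟫, 0, ⟨0, h0K, by simp [hδ0]⟩, rfl⟩
    apply csSup_le hOne
    rintro _ ⟨x, ⟨y, hyK, hxy⟩, rfl⟩
    show ⟪c, x⟫ ≤ _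
    have h1 : ⟪c, x⟫ = ⟪c, y⟫ + ⟪c, x - y⟫ := by
      rw [← inner_add_right]
      congr 1
      abel
    rw [h1]
    have h2 : ⟪c, y⟫ ≤ sSup ((fun x => ⟪c, x⟫) '' K) := le_csSup hbdd ⟨y, hyK, rfl⟩
    have h3 : ⟪c, x - y⟫ ≤ δ := by
      calc ⟪c, x - y⟫ ≤ ‖c‖ * ‖x - y‖ := real_inner_le_norm c _
      _ ≤ δ := by rw [hc, one_mul]; exact hxy
    linarith
end
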